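/- For any preference profile, committee size k ≤ m, and q ∈ (n/(k+1), n/k], there exists at least one committee of size k satisfying q-PSC. -/

import Mathlib

/-!
Each member of the committee is bought at price `q`, paid out of unit voter budgets. The
Minimal Demand rule runs through increasing prefix lengths `j`; at stage `j` a voter only pays
for candidates among her top `j`. When the voters whose top-`j` set is `C'` are owed one more
member of `C'`, they have paid for at most `|W ∩ C'|` members so far, so their unspent budget
`|N| - |W ∩ C'| q ≥ q` buys one more. Hence the rule ends with a committee meeting every
demand and costing at most `n < (k + 1) q`, so it has at most `k` members; any superset of
size `k` still meets every demand. Finally, every solid coalition for `C'` lies in the class of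
voters whose top-`|C'|` set is `C'`, so PSC reduces to these demands.
-/

open Finset

variable {V C : Type*} [Fintype V] [Fintype C] [DecidableEq V] [DecidableEq C] {m : ℕ}

/-- The `j`-prefix of voter `i`: the set of their `j` most preferred candidates
(candidate ranks are given by `rank i`, smaller rank = more preferred). -/
def prefixSet (rank : V → C ≃ Fin m) (i : V) (j : ℕ) : Finset C :=
  Finset.univ.filter fun c => (rank i c : ℕ) < j

/-- The equivalence class of voters whose `j`-prefix equals `C'`. -/
def eqClass (rank : V → C ≃ Fin m) (j : ℕ) (C' : Finset C) : Finset V :=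
  Finset.univ.filter fun i => prefixSet rank i j = C'

/-- `N'` is a solid coalition supporting `C'`: every voter in `N'` prefers every
candidate in `C'` to every candidate outside `C'`. -/
def Solid (rank : V → C ≃ Fin m) (N' : Finset V) (C' : Finset C) : Prop :=
  ∀ i ∈ N', ∀ c' ∈ C', ∀ c ∉ C', (rank i c' : ℕ) < (rank i c : ℕ)

/-- `W` satisfies `q`-PSC. -/
def PSC (rank : V → C ≃ Fin m) (q : ℝ) (W : Finset C) : Prop :=
  ∀ ℓ : ℕ, 0 < ℓ → ∀ N' : Finset V, ∀ C' : Finset C,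
    Solid rank N' C' → (ℓ : ℝ) * q ≤ (N'.card : ℝ) →
    min ℓ C'.card ≤ (W ∩ C').card

/-- One addition step of the Minimal Demand rule at stage `j`: some equivalence
class with `j`-prefix `C'` has an unmet PSC demand, and a candidate of `C' \ W`
is added. -/
def mdStep (rank : V → C ≃ Fin m) (q : ℝ) (j : ℕ) (W W' : Finset C) : Prop :=
  ∃ C' : Finset C,
    ((W ∩ C').card : ℤ) < min ⌊((eqClass rank j C').card : ℝ) / q⌋ (C'.card : ℤ) ∧
    ∃ c ∈ C', c ∉ W ∧ W' = insert c W

/-- A complete run of stage `j` of the Minimal Demand rule: repeat `mdStep`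
until no further step is possible. -/
def mdStage (rank : V → C ≃ Fin m) (q : ℝ) (j : ℕ) (W W' : Finset C) : Prop :=
  Relation.ReflTransGen (mdStep rank q j) W W' ∧ ∀ W'', ¬ mdStep rank q j W' W''

/-- `W` is a possible outcome of the Minimal Demand rule: starting from `∅`,
run stages `j = 1, …, m` to completion (for some choice of added candidates). -/
def MDOutcome (rank : V → C ≃ Fin m) (q : ℝ) (W : Finset C) : Prop :=
  ∃ f : ℕ → Finset C, f 0 = ∅ ∧
    (∀ j < m, mdStage rank q (j + 1) (f j) (f (j + 1))) ∧ W = f m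

section Payments

variable {ι α : Type*} [Fintype ι] [Fintype α]

lemma exists_nonneg_le_sum_eq {a : ι → ℝ} (ha : ∀ i, 0 ≤ a i) {q : ℝ} (hq : 0 ≤ q)
    (hqa : q ≤ ∑ i, a i) : ∃ p : ι → ℝ, (∀ i, 0 ≤ p i ∧ p i ≤ a i) ∧ ∑ i, p i = q := by
  have hs : 0 ≤ ∑ i, a i := sum_nonneg fun i _ => ha i
  refine ⟨fun i => a i * (q / ∑ i, a i),
    fun i => ⟨mul_nonneg (ha i) (div_nonneg hq hs),
      mul_le_of_le_one_right (ha i) (div_le_one_of_le₀ hqa hs)⟩, ?_⟩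
  rw [← sum_mul]
  rcases hs.eq_or_lt with h | h
  · rw [← h] at hqa ⊢
    simp only [div_zero, mul_zero]
    linarith
  · exact mul_div_cancel₀ q h.ne'

/-- Voter `i` pays `g i c` towards candidate `c`. -/
structure IsPayment (S : ι → Finset α) (q : ℝ) (W : Finset α) (g : ι → α → ℝ) : Prop where
  nonneg : ∀ i c, 0 ≤ g i c
  support : ∀ i c, g i c ≠ 0 → c ∈ W ∧ c ∈ S i
  budget : ∀ i, ∑ c, g i c ≤ 1
  price : ∀ c ∈ W, ∑ i, g i c = q

def Affordable (S : ι → Finset α) (q : ℝ) (W : Finset α) : Prop :=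
  ∃ g, IsPayment S q W g

namespace IsPayment

variable {S S' : ι → Finset α} {q : ℝ} {W : Finset α} {g : ι → α → ℝ}

lemma zero : IsPayment S q ∅ 0 where
  nonneg _ _ := le_rfl
  support _ _ h := absurd rfl h
  budget _ := by simp
  price _ h := absurd h (notMem_empty _)

lemma mono (hg : IsPayment S q W g) (hS : ∀ i, S i ⊆ S' i) : IsPayment S' q W g where
  nonneg := hg.nonneg
  support i c h := ⟨(hg.support i c h).1, hS i (hg.support i c h).2⟩
  budget := hg.budget
  price := hg.price

lemma card_mul_le (hg : IsPayment S q W g) : #W * q ≤ Fintype.card ι :=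
  calc #W * q = ∑ c ∈ W, ∑ i, g i c := by rw [sum_congr rfl hg.price, sum_const, nsmul_eq_mul]
    _ = ∑ i, ∑ c ∈ W, g i c := sum_comm
    _ ≤ ∑ _i : ι, (1 : ℝ) := sum_le_sum fun i _ =>
        (sum_le_sum_of_subset_of_nonneg (subset_univ W) fun c _ _ => hg.nonneg i c).trans
          (hg.budget i)
    _ = Fintype.card ι := by simp

lemma sum_spent_le [DecidableEq α] (hg : IsPayment S q W g) {N : Finset ι} {T : Finset α}
    (hN : ∀ i ∈ N, S i ⊆ T) : ∑ i ∈ N, ∑ c, g i c ≤ #(W ∩ T) * q :=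
  calc ∑ i ∈ N, ∑ c, g i c = ∑ c ∈ W ∩ T, ∑ i ∈ N, g i c := by
        rw [sum_comm]
        refine (sum_subset (subset_univ _) fun c _ hc => sum_eq_zero fun i hi => ?_).symm
        by_contra h
        obtain ⟨hcW, hcS⟩ := hg.support i c h
        exact hc (mem_inter.2 ⟨hcW, hN i hi hcS⟩)
    _ ≤ ∑ _c ∈ W ∩ T, q := sum_le_sum fun c hc => hg.price c (mem_inter.1 hc).1 ▸
        sum_le_sum_of_subset_of_nonneg (subset_univ N) fun i _ _ => hg.nonneg i c
    _ = #(W ∩ T) * q := by rw [sum_const, nsmul_eq_mul]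

lemma insert [DecidableEq α] (hg : IsPayment S q W g) {c : α} (hc : c ∉ W) {p : ι → ℝ}
    (hp : ∀ i, 0 ≤ p i) (hpS : ∀ i, p i ≠ 0 → c ∈ S i) (hpb : ∀ i, ∑ c', g i c' + p i ≤ 1)
    (hpq : ∑ i, p i = q) :
    IsPayment S q (insert c W) (fun i => g i + Pi.single c (p i)) where
  nonneg i c' := add_nonneg (hg.nonneg i c') (by
    rcases eq_or_ne c' c with rfl | h
    · simpa using hp i
    · simp [h])
  support i c' h := by
    rcases eq_or_ne c' c with rfl | hc'
    · have hgc : g i c' = 0 := by_contra fun h => hc (hg.support i c' h).1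
      exact ⟨mem_insert_self _ _, hpS i (by simpa [hgc] using h)⟩
    · have := hg.support i c' (by simpa [hc'] using h)
      exact ⟨mem_insert_of_mem this.1, this.2⟩
  budget i := by simpa [sum_add_distrib, sum_pi_single'] using hpb i
  price c' hc' := by
    rcases eq_or_ne c' c with rfl | hne
    · have hgc : ∀ i, g i c' = 0 := fun i => by_contra fun h => hc (hg.support i c' h).1
      simpa [hgc] using hpq
    · simpa [hne] using hg.price c' ((mem_insert.1 hc').resolve_left hne)

end IsPayment

lemma Affordable.insert [DecidableEq α] {S : ι → Finset α} {q : ℝ} (hq : 0 ≤ q) {W : Finset α}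
    (hW : Affordable S q W) {N : Finset ι} {T : Finset α} (hN : ∀ i ∈ N, S i = T) {c : α}
    (hcT : c ∈ T) (hcW : c ∉ W) (hdemand : (#(W ∩ T) + 1) * q ≤ #N) :
    Affordable S q (insert c W) := by
  classical
  obtain ⟨g, hg⟩ := hW
  set a : ι → ℝ := fun i => if i ∈ N then 1 - ∑ c, g i c else 0
  have ha : ∀ i, 0 ≤ a i ∧ ∑ c, g i c + a i ≤ 1 := fun i => by
    by_cases hi : i ∈ N <;> simp [a, hi, hg.budget i]
  have hslack : q ≤ ∑ i, a i := by
    have hsum : ∑ i, a i = #N - ∑ i ∈ N, ∑ c, g i c := by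
      simp [a, sum_ite_mem, sum_sub_distrib]
    have := hg.sum_spent_le fun i hi => (hN i hi).le
    linarith
  obtain ⟨p, hp, hpq⟩ := exists_nonneg_le_sum_eq (fun i => (ha i).1) hq hslack
  have hpN : ∀ i, p i ≠ 0 → i ∈ N := fun i h => by
    by_contra hi
    exact h (le_antisymm (by simpa [a, hi] using (hp i).2) (hp i).1)
  exact ⟨_, hg.insert hcW (fun i => (hp i).1) (fun i h => hN i (hpN i h) ▸ hcT)
    (fun i => by linarith [hp i, ha i]) hpq⟩

end Payments

section MinimalDemand

omit [DecidableEq V]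

variable (rank : V → C ≃ Fin m) (q : ℝ)

omit [Fintype V] [DecidableEq C] in
lemma card_prefixSet (i : V) (j : ℕ) : #(prefixSet rank i j) = min m j := by
  rw [← Fin.card_filter_val_lt]
  exact card_equiv (rank i) (by simp [prefixSet])

omit [Fintype V] [DecidableEq C] in
lemma prefixSet_mono (i : V) {j j' : ℕ} (h : j ≤ j') : prefixSet rank i j ⊆ prefixSet rank i j' :=
  fun c hc => by
    simp only [prefixSet, mem_filter, mem_univ, true_and] at hc ⊢
    omega

def DemandsMet (j : ℕ) (W : Finset C) : Prop :=
  ∀ C' : Finset C, ∀ ℓ : ℕ, 0 < ℓ → ℓ * q ≤ #(eqClass rank j C') → min ℓ #C' ≤ #(W ∩ C')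

variable {rank q}

omit [Fintype V] in
lemma Solid.prefixSet_card_eq {N' : Finset V} {C' : Finset C} (h : Solid rank N' C') {i : V}
    (hi : i ∈ N') : prefixSet rank i #C' = C' := by
  have hsub : prefixSet rank i #C' ⊆ C' := fun c hc => by
    by_contra hcC
    have hle : #C' ≤ #(Iio (rank i c)) := card_le_card_of_injOn (rank i)
      (fun c' hc' => by simpa using h i hi c' hc' c hcC) (rank i).injective.injOn
    simp only [prefixSet, mem_filter, mem_univ, true_and] at hc
    rw [Fin.card_Iio] at hle
    omega
  refine eq_of_subset_of_card_le hsub ?_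
  have : #C' ≤ m := by simpa [Fintype.card_congr (rank i)] using card_le_univ C'
  rw [card_prefixSet]
  omega

lemma DemandsMet.mono {j : ℕ} {W W' : Finset C} (hW : DemandsMet rank q j W) (h : W ⊆ W') :
    DemandsMet rank q j W' :=
  fun C' ℓ hℓ hN => (hW C' ℓ hℓ hN).trans (card_le_card (inter_subset_inter_right h))

lemma exists_superset_demandsMet (hq : 0 ≤ q) {j : ℕ} {W : Finset C}
    (hW : Affordable (fun i => prefixSet rank i j) q W) :
    ∃ W', W ⊆ W' ∧ Affordable (fun i => prefixSet rank i j) q W' ∧ DemandsMet rank q j W' := by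
  classical
  obtain ⟨W', hW', hmax⟩ := exists_max_image
    ((univ : Finset (Finset C)).filter
      fun W' => W ⊆ W' ∧ Affordable (fun i => prefixSet rank i j) q W')
    card ⟨W, by simp [hW]⟩
  simp only [mem_filter, mem_univ, true_and] at hW' hmax
  refine ⟨W', hW'.1, hW'.2, fun C' ℓ hℓ hN => ?_⟩
  by_contra! hunmet
  obtain ⟨c, hcC', hcW'⟩ :=
    exists_mem_notMem_of_card_lt_card (hunmet.trans_le (min_le_right _ _))
  have hcW : c ∉ W' := fun h => hcW' (mem_inter.2 ⟨h, hcC'⟩)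
  have hdemand : (#(W' ∩ C') + 1 : ℝ) * q ≤ #(eqClass rank j C') := by
    refine le_trans ?_ hN
    gcongr
    exact_mod_cast hunmet.trans_le (min_le_left _ _)
  have := hmax _ ⟨hW'.1.trans (subset_insert c W'),
    hW'.2.insert hq (fun i hi => (mem_filter.1 hi).2) hcC' hcW hdemand⟩
  rw [card_insert_of_notMem hcW] at this
  omega

lemma exists_affordable_demandsMet (hq : 0 ≤ q) (j : ℕ) :
    ∃ W, Affordable (fun i => prefixSet rank i j) q W ∧ ∀ j' < j, DemandsMet rank q j' W := by
  induction j with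
  | zero => exact ⟨∅, ⟨0, .zero⟩, by simp⟩
  | succ j ih =>
    obtain ⟨W, hW, hmet⟩ := ih
    obtain ⟨W', hWW', ⟨g, hg⟩, hmet'⟩ := exists_superset_demandsMet hq hW
    refine ⟨W', ⟨g, hg.mono fun i => prefixSet_mono rank i j.le_succ⟩, fun j' hj' => ?_⟩
    rcases (Nat.lt_succ_iff.1 hj').lt_or_eq with h | rfl
    · exact (hmet j' h).mono hWW'
    · exact hmet'

lemma psc_of_demandsMet {W₀ W : Finset C} (hW : W₀ ⊆ W)
    (hmet : ∀ j ≤ Fintype.card C, DemandsMet rank q j W₀) : PSC rank q W := by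
  intro ℓ hℓ N' C' hsolid hN'
  have hN'sub : N' ⊆ eqClass rank #C' C' :=
    fun i hi => mem_filter.2 ⟨mem_univ i, hsolid.prefixSet_card_eq hi⟩
  exact (hmet #C' (card_le_univ C')).mono hW C' ℓ hℓ
    (hN'.trans (mod_cast card_le_card hN'sub))

end MinimalDemand

theorem psc_committee_exists_general (rank : V → C ≃ Fin m) (q : ℝ) (k : ℕ)
    (hkm : k ≤ Fintype.card C)
    (hql : (Fintype.card V : ℝ) / ((k : ℝ) + 1) < q) :
    ∃ W : Finset C, W.card = k ∧ PSC rank q W := by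
  have hq : 0 < q := lt_of_le_of_lt (by positivity) hql
  obtain ⟨W₀, ⟨g, hg⟩, hmet⟩ := exists_affordable_demandsMet (rank := rank) hq.le
    (Fintype.card C + 1)
  have hW₀ : #W₀ ≤ k := by
    have hn : (Fintype.card V : ℝ) < (k + 1) * q := by
      rwa [div_lt_iff₀ (by positivity), mul_comm] at hql
    have : (#W₀ : ℝ) < k + 1 := lt_of_mul_lt_mul_right (hg.card_mul_le.trans_lt hn) hq.le
    exact Nat.lt_succ_iff.1 (by exact_mod_cast this)
  obtain ⟨W, hW₀W, -, hWk⟩ := exists_subsuperset_card_eq (subset_univ W₀) hW₀ (by rwa [card_univ])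
  exact ⟨W, hWk, psc_of_demandsMet hW₀W fun j hj => hmet j (Nat.lt_succ_of_le hj)⟩

/-- for any profile, `k ≤ m` and `q ∈ (n/(k+1), n/k]`, there
exists a committee of size `k` satisfying `q`-PSC. -/
theorem psc_committee_exists (rank : V → C ≃ Fin m) (q : ℝ) (k : ℕ)
    (hkm : k ≤ Fintype.card C)
    (hql : (Fintype.card V : ℝ) / ((k : ℝ) + 1) < q)
    (hqu : q ≤ (Fintype.card V : ℝ) / (k : ℝ)) :
    ∃ W : Finset C, W.card = k ∧ PSC rank q W :=
  psc_committee_exists_general rank q k hkm hql
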